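/- Let B be a real p×q matrix, G a symmetric real q×q matrix, and G' a symmetric real p×p matrix. Let A = [[G', B, B],[Bᵀ, 0, G],[Bᵀ, G, 0]] (a (p+2q)-square matrix) and C = [[G, Bᵀ, Bᵀ],[B, 0, G'],[B, G', 0]] (a (2p+q)-square matrix). Then the (3p+3q)-square matrices A ⊕ [[0, G'],[G', 0]] ⊕ G and C ⊕ [[0, G],[G, 0]] ⊕ G' are cospectral, i.e., they have the same characteristic polynomial (after transporting along a bijection of their index types). -/

import Mathlib

/-!
Both sides are direct sums of blocks whose characteristic polynomials can be computed
separately. The unipotent change of basis `(u, v, w) ↦ (u, v + w, w)` makes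
`[[M, B₁, B₁], [B₂, D, G], [B₂, G, D]]` block lower triangular with diagonal blocks
`[[M, B₁], [2 B₂, D + G]]` and `D - G`; in particular `[[D, G], [G, D]]` has characteristic
polynomial `χ(D + G) χ(D - G)`. Hence `χ(A) = χ([[G', B], [2 Bᵀ, G]]) χ(-G)` and
`χ(C) = χ([[G, Bᵀ], [2 B, G']]) χ(-G')`, and the two remaining `2 × 2` block matrices are
conjugate: swap the two blocks, then conjugate by `diag(2, 1)` to move the factor `2` from
one off-diagonal block to the other.
-/

open Matrix

/-- The matrix `A = [[G', B, B], [Bᵀ, 0, G], [Bᵀ, G, 0]]` of Construction II,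
indexed by `Fin p ⊕ (Fin q ⊕ Fin q)`. -/
def matA (p q : ℕ) (B : Matrix (Fin p) (Fin q) ℝ) (G : Matrix (Fin q) (Fin q) ℝ)
    (G' : Matrix (Fin p) (Fin p) ℝ) :
    Matrix (Fin p ⊕ (Fin q ⊕ Fin q)) (Fin p ⊕ (Fin q ⊕ Fin q)) ℝ :=
  Matrix.fromBlocks G' (Matrix.fromCols B B) (Matrix.fromRows Bᵀ Bᵀ)
    (Matrix.fromBlocks 0 G G 0)

/-- The matrix `C = [[G, Bᵀ, Bᵀ], [B, 0, G'], [B, G', 0]]` of Construction II,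
indexed by `Fin q ⊕ (Fin p ⊕ Fin p)`. -/
def matC2 (p q : ℕ) (B : Matrix (Fin p) (Fin q) ℝ) (G : Matrix (Fin q) (Fin q) ℝ)
    (G' : Matrix (Fin p) (Fin p) ℝ) :
    Matrix (Fin q ⊕ (Fin p ⊕ Fin p)) (Fin q ⊕ (Fin p ⊕ Fin p)) ℝ :=
  Matrix.fromBlocks G (Matrix.fromCols Bᵀ Bᵀ) (Matrix.fromRows B B)
    (Matrix.fromBlocks 0 G' G' 0)

namespace Matrix

variable {R : Type*} [CommRing R] {l m n : Type*} [Fintype l] [DecidableEq l]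
  [Fintype m] [DecidableEq m] [Fintype n] [DecidableEq n]

theorem charpoly_mul_mul_of_mul_eq_one {P Q : Matrix n n R} (h : Q * P = 1)
    (N : Matrix n n R) : (P * N * Q).charpoly = N.charpoly := by
  rw [mul_assoc, charpoly_mul_comm, mul_assoc, h, mul_one]

theorem charpoly_submatrix_equiv (M : Matrix n n R) (e : m ≃ n) :
    (M.submatrix e e).charpoly = M.charpoly :=
  charpoly_reindex e.symm M

theorem charpoly_fromBlocks_comm (A : Matrix m m R) (B : Matrix m n R) (C : Matrix n m R)
    (D : Matrix n n R) : (fromBlocks A B C D).charpoly = (fromBlocks D C B A).charpoly := by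
  simpa using (charpoly_submatrix_equiv (fromBlocks A B C D) (Equiv.sumComm n m)).symm

theorem charpoly_fromBlocks_smul₁₂ {c : R} (hc : IsUnit c) (A : Matrix m m R)
    (B : Matrix m n R) (C : Matrix n m R) (D : Matrix n n R) :
    (fromBlocks A (c • B) C D).charpoly = (fromBlocks A B (c • C) D).charpoly := by
  obtain ⟨u, rfl⟩ := hc
  have hinv : fromBlocks ((↑u⁻¹ : R) • 1) 0 0 1 * fromBlocks ((u : R) • 1) 0 0 1 =
      (1 : Matrix (m ⊕ n) (m ⊕ n) R) := by
    simp [fromBlocks_multiply, smul_smul]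
  rw [← charpoly_mul_mul_of_mul_eq_one hinv (fromBlocks A B _ D)]
  simp [fromBlocks_multiply, smul_smul]

theorem charpoly_fromBlocks_self_self (D G : Matrix n n R) :
    (fromBlocks D G G D).charpoly = (D + G).charpoly * (D - G).charpoly := by
  have hinv : fromBlocks 1 (-1) 0 1 * fromBlocks 1 1 0 1 = (1 : Matrix (n ⊕ n) (n ⊕ n) R) := by
    simp [fromBlocks_multiply]
  rw [← charpoly_mul_mul_of_mul_eq_one hinv]
  simp only [fromBlocks_multiply, Matrix.one_mul, Matrix.mul_one, Matrix.zero_mul,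
    Matrix.mul_zero, add_zero, zero_add, Matrix.mul_neg]
  rw [add_comm G D, neg_add_cancel, neg_add_eq_sub, charpoly_fromBlocks_zero₁₂]

theorem charpoly_fromBlocks_fromCols_zero (M : Matrix l l R) (X : Matrix l m R)
    (Y : Matrix m l R) (Z : Matrix n l R) (E : Matrix m m R) (F : Matrix n m R)
    (H : Matrix n n R) :
    (fromBlocks M (fromCols X 0) (fromRows Y Z) (fromBlocks E 0 F H)).charpoly =
      (fromBlocks M X Y E).charpoly * H.charpoly := by
  have hassoc : (fromBlocks M (fromCols X 0) (fromRows Y Z) (fromBlocks E 0 F H)).submatrix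
      (Equiv.sumAssoc l m n) (Equiv.sumAssoc l m n) =
      fromBlocks (fromBlocks M X Y E) 0 (fromCols Z F) H := by
    ext ((i | i) | i) ((j | j) | j) <;> rfl
  rw [← charpoly_submatrix_equiv _ (Equiv.sumAssoc l m n), hassoc, charpoly_fromBlocks_zero₁₂]

theorem charpoly_fromBlocks_fromCols_fromRows (M : Matrix m m R) (B₁ : Matrix m n R)
    (B₂ : Matrix n m R) (D G : Matrix n n R) :
    (fromBlocks M (fromCols B₁ B₁) (fromRows B₂ B₂) (fromBlocks D G G D)).charpoly =
      (fromBlocks M B₁ ((2 : R) • B₂) (D + G)).charpoly * (D - G).charpoly := by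
  have hinv : fromBlocks 1 0 0 (fromBlocks 1 (-1) 0 1) * fromBlocks 1 0 0 (fromBlocks 1 1 0 1) =
      (1 : Matrix (m ⊕ (n ⊕ n)) (m ⊕ (n ⊕ n)) R) := by
    simp [fromBlocks_multiply]
  rw [← charpoly_mul_mul_of_mul_eq_one hinv]
  simp only [fromBlocks_multiply, fromCols_mul_fromBlocks, fromBlocks_mul_fromRows,
    Matrix.one_mul, Matrix.mul_one, Matrix.zero_mul, Matrix.mul_zero, add_zero, zero_add,
    Matrix.mul_neg]
  rw [add_comm G D, neg_add_cancel, neg_add_cancel, neg_add_eq_sub, ← two_smul R B₂,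
    charpoly_fromBlocks_fromCols_zero]

end Matrix

theorem charpoly_matA (p q : ℕ) (B : Matrix (Fin p) (Fin q) ℝ) (G : Matrix (Fin q) (Fin q) ℝ)
    (G' : Matrix (Fin p) (Fin p) ℝ) :
    (matA p q B G G').charpoly =
      (fromBlocks G' B ((2 : ℝ) • Bᵀ) G).charpoly * (-G).charpoly := by
  simpa [matA] using charpoly_fromBlocks_fromCols_fromRows G' B Bᵀ 0 G

theorem charpoly_matC2 (p q : ℕ) (B : Matrix (Fin p) (Fin q) ℝ) (G : Matrix (Fin q) (Fin q) ℝ)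
    (G' : Matrix (Fin p) (Fin p) ℝ) :
    (matC2 p q B G G').charpoly =
      (fromBlocks G Bᵀ ((2 : ℝ) • B) G').charpoly * (-G').charpoly := by
  simpa [matC2] using charpoly_fromBlocks_fromCols_fromRows G Bᵀ B 0 G'

theorem construction_II_cospectral (p q : ℕ) (B : Matrix (Fin p) (Fin q) ℝ)
    (G : Matrix (Fin q) (Fin q) ℝ) (G' : Matrix (Fin p) (Fin p) ℝ) :
    ∃ e : (((Fin p ⊕ (Fin q ⊕ Fin q)) ⊕ (Fin p ⊕ Fin p)) ⊕ Fin q) ≃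
        (((Fin q ⊕ (Fin p ⊕ Fin p)) ⊕ (Fin q ⊕ Fin q)) ⊕ Fin p),
      (Matrix.fromBlocks
          (Matrix.fromBlocks (matA p q B G G') 0 0 (Matrix.fromBlocks 0 G' G' 0)) 0 0
          G).charpoly =
        ((Matrix.fromBlocks
            (Matrix.fromBlocks (matC2 p q B G G') 0 0 (Matrix.fromBlocks 0 G G 0)) 0 0
            G').submatrix e e).charpoly := by
  refine ⟨Fintype.equivOfCardEq (by simp only [Fintype.card_sum]; ring), ?_⟩
  have hcore : (fromBlocks G' B ((2 : ℝ) • Bᵀ) G).charpoly =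
      (fromBlocks G Bᵀ ((2 : ℝ) • B) G').charpoly := by
    rw [charpoly_fromBlocks_comm, charpoly_fromBlocks_smul₁₂ two_ne_zero.isUnit]
  simp only [charpoly_submatrix_equiv, charpoly_fromBlocks_zero₁₂,
    charpoly_fromBlocks_self_self, charpoly_matA, charpoly_matC2, hcore, zero_add, zero_sub]
  ring
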